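/- The iterated sum Σ_{ℓ_4 = 4}^{∞} ( Σ_{ℓ_3 = 3}^{ℓ_4 - 1} ( Σ_{ℓ_2 = 2}^{ℓ_3 - 1} ( Σ_{ℓ_1 = 1}^{ℓ_2 - 1} 1/(ℓ_1² · ℓ_2² · ℓ_3² · ℓ_4²) ) ) ) converges and equals π⁸ / 9!. -/

import Mathlib

/-!
The inner sums up to `ℓ₄ ≤ N` form the elementary symmetric function `e₄` of the numbers
`1 / n²`, `1 ≤ n ≤ N`. Newton's identities express `e₄` as a polynomial in the power sums
`p_j = ∑_{n ≤ N} n^(-2j)`, `j ≤ 4`, which tend to `ζ(2j)`; evaluating that polynomial at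
`ζ(2) = π²/6`, `ζ(4) = π⁴/90`, `ζ(6) = π⁶/945`, `ζ(8) = π⁸/9450` gives `π⁸/9!`, and
nonnegativity turns the limit of partial sums into an unconditional sum.
-/

open Real Finset Filter Topology

section ElementarySymmetric

variable {R : Type*} [CommSemiring R] (a : ℕ → R)

/-- `esymmPrefix a k N = e_k (a 1, …, a N)`, the sum of `a ℓ₁ ⋯ a ℓₖ` over `1 ≤ ℓ₁ < ⋯ < ℓₖ ≤ N`. -/
def esymmPrefix : ℕ → ℕ → R
  | 0, _ => 1
  | k + 1, N => ∑ n ∈ Icc (k + 1) N, a n * esymmPrefix k (n - 1)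

def psumPrefix (k N : ℕ) : R := ∑ n ∈ Icc 1 N, a n ^ k

@[simp]
lemma esymmPrefix_zero (N : ℕ) : esymmPrefix a 0 N = 1 := rfl

@[simp]
lemma esymmPrefix_succ_zero (k : ℕ) : esymmPrefix a (k + 1) 0 = 0 := by
  simp [esymmPrefix]

lemma esymmPrefix_eq_zero_of_lt {k N : ℕ} (h : N < k) : esymmPrefix a k N = 0 := by
  obtain ⟨k, rfl⟩ := Nat.exists_eq_add_of_lt (Nat.zero_lt_of_lt h)
  rw [esymmPrefix, Icc_eq_empty_of_lt (by omega), sum_empty]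

lemma esymmPrefix_succ_succ (k N : ℕ) :
    esymmPrefix a (k + 1) (N + 1) = esymmPrefix a (k + 1) N + a (N + 1) * esymmPrefix a k N := by
  rcases le_or_gt k N with h | h
  · rw [esymmPrefix, esymmPrefix, sum_Icc_succ_top (by omega), Nat.add_sub_cancel]
  · rw [esymmPrefix_eq_zero_of_lt a (by omega), esymmPrefix_eq_zero_of_lt a (by omega),
      esymmPrefix_eq_zero_of_lt a h, mul_zero, add_zero]

@[simp]
lemma psumPrefix_zero_right (k : ℕ) : psumPrefix a k 0 = 0 := by
  simp [psumPrefix]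

lemma psumPrefix_succ (k N : ℕ) : psumPrefix a k (N + 1) = psumPrefix a k N + a (N + 1) ^ k := by
  rw [psumPrefix, psumPrefix, sum_Icc_succ_top (by omega)]

end ElementarySymmetric

section Newton

variable {R : Type*} [CommRing R] (a : ℕ → R)

lemma sum_neg_one_pow_mul_esymmPrefix_mul_pow (k N : ℕ) :
    ∑ i ∈ range (k + 1), (-1) ^ i * esymmPrefix a (k - i) (N + 1) * a (N + 1) ^ (i + 1) =
      a (N + 1) * esymmPrefix a k N := by
  rcases k with _ | m
  · simp [mul_comm]
  let f i := (-1) ^ i * a (N + 1) ^ (i + 1) * esymmPrefix a (m + 1 - i) N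
  have hterm : ∀ i ∈ range (m + 1),
      (-1) ^ i * esymmPrefix a (m + 1 - i) (N + 1) * a (N + 1) ^ (i + 1) = f i - f (i + 1) := by
    intro i _
    simp only [f]
    rw [show m + 1 - i = m - i + 1 by grind, show m + 1 - (i + 1) = m - i by omega,
      esymmPrefix_succ_succ]
    ring
  rw [sum_range_succ, sum_congr rfl hterm, sum_range_sub']
  simp [f]

theorem mul_esymmPrefix_eq_sum (k N : ℕ) :
    (k + 1 : R) * esymmPrefix a (k + 1) N =
      ∑ i ∈ range (k + 1), (-1) ^ i * esymmPrefix a (k - i) N * psumPrefix a (i + 1) N := by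
  induction N generalizing k with
  | zero => simp
  | succ N ih =>
    have hpsum : ∑ i ∈ range (k + 1), (-1) ^ i * esymmPrefix a (k - i) (N + 1) *
        psumPrefix a (i + 1) N =
          (k + 1) * esymmPrefix a (k + 1) N + a (N + 1) * (k * esymmPrefix a k N) := by
      rcases k with _ | m
      · simpa using (ih 0).symm
      have hterm : ∀ i ∈ range (m + 1),
          (-1) ^ i * esymmPrefix a (m + 1 - i) (N + 1) * psumPrefix a (i + 1) N =
            (-1) ^ i * esymmPrefix a (m + 1 - i) N * psumPrefix a (i + 1) N +
              a (N + 1) * ((-1) ^ i * esymmPrefix a (m - i) N * psumPrefix a (i + 1) N) := by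
        intro i _
        rw [show m + 1 - i = m - i + 1 by grind, esymmPrefix_succ_succ]
        ring
      rw [sum_range_succ, sum_congr rfl hterm, sum_add_distrib, ← mul_sum, ← ih m, ih (m + 1),
        sum_range_succ _ (m + 1)]
      simp only [tsub_self, esymmPrefix_zero, mul_one, Nat.cast_add, Nat.cast_one]
      ring
    simp_rw [psumPrefix_succ, mul_add, sum_add_distrib, hpsum,
      sum_neg_one_pow_mul_esymmPrefix_mul_pow, esymmPrefix_succ_succ]
    ring

theorem mul_esymmPrefix_four (N : ℕ) :
    24 * esymmPrefix a 4 N =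
      psumPrefix a 1 N ^ 4 - 6 * psumPrefix a 2 N * psumPrefix a 1 N ^ 2 +
        3 * psumPrefix a 2 N ^ 2 + 8 * psumPrefix a 3 N * psumPrefix a 1 N -
        6 * psumPrefix a 4 N := by
  have h₁ := mul_esymmPrefix_eq_sum a 0 N
  have h₂ := mul_esymmPrefix_eq_sum a 1 N
  have h₃ := mul_esymmPrefix_eq_sum a 2 N
  have h₄ := mul_esymmPrefix_eq_sum a 3 N
  simp only [sum_range_succ, sum_range_zero] at h₁ h₂ h₃ h₄
  norm_num at h₁ h₂ h₃ h₄
  linear_combination 6 * h₄ + 2 * psumPrefix a 1 N * h₃ +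
    (psumPrefix a 1 N ^ 2 - 3 * psumPrefix a 2 N) * h₂ +
    (psumPrefix a 1 N ^ 3 - 5 * psumPrefix a 1 N * psumPrefix a 2 N + 6 * psumPrefix a 3 N) * h₁

end Newton

lemma esymmPrefix_nonneg {R : Type*} [CommSemiring R] [PartialOrder R] [IsOrderedRing R]
    {a : ℕ → R} (ha : ∀ n, 0 ≤ a n) (k N : ℕ) : 0 ≤ esymmPrefix a k N := by
  induction k generalizing N with
  | zero => exact zero_le_one
  | succ k ih => exact sum_nonneg fun n _ => mul_nonneg (ha n) (ih _)

@[simp]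
theorem bernoulli'_six : bernoulli' 6 = 1 / 42 := by
  rw [bernoulli'_def]
  norm_num [sum_range_succ, Nat.choose, bernoulli'_eq_zero_of_odd]

@[simp]
theorem bernoulli'_eight : bernoulli' 8 = -1 / 30 := by
  rw [bernoulli'_def]
  norm_num [sum_range_succ, Nat.choose, bernoulli'_eq_zero_of_odd]

theorem hasSum_zeta_six : HasSum (fun n : ℕ => (1 : ℝ) / (n : ℝ) ^ 6) (π ^ 6 / 945) := by
  convert hasSum_zeta_nat three_ne_zero using 1
  rw [bernoulli_eq_bernoulli'_of_ne_one (by norm_num), bernoulli'_six]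
  norm_num [Nat.factorial]
  ring

theorem hasSum_zeta_eight : HasSum (fun n : ℕ => (1 : ℝ) / (n : ℝ) ^ 8) (π ^ 8 / 9450) := by
  convert hasSum_zeta_nat four_ne_zero using 1
  rw [bernoulli_eq_bernoulli'_of_ne_one (by norm_num), bernoulli'_eight]
  norm_num [Nat.factorial]
  ring

lemma tendsto_sum_Icc_one_of_hasSum {M : Type*} [AddCommMonoid M] [TopologicalSpace M]
    {f : ℕ → M} {v : M} (hf : HasSum f v) (h0 : f 0 = 0) :
    Tendsto (fun N => ∑ n ∈ Icc 1 N, f n) atTop (𝓝 v) := by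
  refine ((tendsto_add_atTop_iff_nat 1).mpr hf.tendsto_sum_nat).congr fun N => ?_
  rw [range_eq_Ico, sum_eq_sum_Ico_succ_bot N.add_one_pos, h0, zero_add, Ico_add_one_right_eq_Icc]

lemma tendsto_psumPrefix_one_div_sq {k : ℕ} (hk : k ≠ 0) {v : ℝ}
    (hv : HasSum (fun n : ℕ => 1 / (n : ℝ) ^ (2 * k)) v) :
    Tendsto (psumPrefix (fun n : ℕ => 1 / (n : ℝ) ^ 2) k) atTop (𝓝 v) := by
  refine tendsto_sum_Icc_one_of_hasSum (hv.congr_fun fun n => ?_) (by simp [hk])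
  rw [div_pow, one_pow, pow_mul]

lemma tendsto_esymmPrefix_four_one_div_sq :
    Tendsto (esymmPrefix (fun n : ℕ => 1 / (n : ℝ) ^ 2) 4) atTop
      (𝓝 (π ^ 8 / (Nat.factorial 9 : ℝ))) := by
  have h₁ := tendsto_psumPrefix_one_div_sq one_ne_zero hasSum_zeta_two
  have h₂ := tendsto_psumPrefix_one_div_sq two_ne_zero hasSum_zeta_four
  have h₃ := tendsto_psumPrefix_one_div_sq three_ne_zero hasSum_zeta_six
  have h₄ := tendsto_psumPrefix_one_div_sq four_ne_zero hasSum_zeta_eight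
  have hlim := (((((h₁.pow 4).sub ((h₂.const_mul 6).mul (h₁.pow 2))).add
    ((h₂.pow 2).const_mul 3)).add ((h₃.const_mul 8).mul h₁)).sub (h₄.const_mul 6)).div_const 24
  refine (hlim.congr fun N => ?_).trans_eq ?_
  · rw [← mul_esymmPrefix_four]; ring
  · norm_num [Nat.factorial]; ring

lemma hasSum_subtype_le_of_tendsto_sum_Icc {f : ℕ → ℝ} (hf : ∀ n, 0 ≤ f n) {k : ℕ} {L : ℝ}
    (h : Tendsto (fun N => ∑ n ∈ Icc k N, f n) atTop (𝓝 L)) :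
    HasSum (fun n : {m : ℕ // k ≤ m} => f n) L := by
  refine (hasSum_subtype_iff_indicator (s := {m | k ≤ m})).mpr ?_
  rw [hasSum_iff_tendsto_nat_of_nonneg (Set.indicator_nonneg fun n _ => hf n),
    ← tendsto_add_atTop_iff_nat 1]
  refine h.congr fun N => ?_
  rw [sum_indicator_eq_sum_filter]
  congr 1
  ext n
  simp only [mem_Icc, mem_filter, mem_range, Set.mem_ofPred_eq]
  omega

lemma sum_Icc_one_div_sq_eq_mul_esymmPrefix (n : ℕ) :
    ∑ ℓ₃ ∈ Icc 3 (n - 1), ∑ ℓ₂ ∈ Icc 2 (ℓ₃ - 1), ∑ ℓ₁ ∈ Icc 1 (ℓ₂ - 1),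
        1 / ((ℓ₁ : ℝ) ^ 2 * (ℓ₂ : ℝ) ^ 2 * (ℓ₃ : ℝ) ^ 2 * (n : ℝ) ^ 2) =
      1 / (n : ℝ) ^ 2 * esymmPrefix (fun n : ℕ => 1 / (n : ℝ) ^ 2) 3 (n - 1) := by
  simp only [esymmPrefix, mul_sum, mul_one]
  refine sum_congr rfl fun _ _ => sum_congr rfl fun _ _ => sum_congr rfl fun _ _ => ?_
  field_simp

theorem stmt_9 :
    Summable (fun ℓ₄ : {m : ℕ // 4 ≤ m} =>
        ∑ ℓ₃ ∈ Finset.Icc 3 ((ℓ₄ : ℕ) - 1), ∑ ℓ₂ ∈ Finset.Icc 2 (ℓ₃ - 1),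
          ∑ ℓ₁ ∈ Finset.Icc 1 (ℓ₂ - 1),
            1 / ((ℓ₁ : ℝ) ^ 2 * (ℓ₂ : ℝ) ^ 2 * (ℓ₃ : ℝ) ^ 2 * ((ℓ₄ : ℕ) : ℝ) ^ 2)) ∧
      ∑' ℓ₄ : {m : ℕ // 4 ≤ m},
          ∑ ℓ₃ ∈ Finset.Icc 3 ((ℓ₄ : ℕ) - 1), ∑ ℓ₂ ∈ Finset.Icc 2 (ℓ₃ - 1),
            ∑ ℓ₁ ∈ Finset.Icc 1 (ℓ₂ - 1),
              1 / ((ℓ₁ : ℝ) ^ 2 * (ℓ₂ : ℝ) ^ 2 * (ℓ₃ : ℝ) ^ 2 * ((ℓ₄ : ℕ) : ℝ) ^ 2) =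
        π ^ 8 / (Nat.factorial 9 : ℝ) := by
  have ha : ∀ n : ℕ, 0 ≤ 1 / (n : ℝ) ^ 2 := fun n => by positivity
  have hsum := hasSum_subtype_le_of_tendsto_sum_Icc
    (fun n => mul_nonneg (ha n) (esymmPrefix_nonneg ha 3 (n - 1))) tendsto_esymmPrefix_four_one_div_sq
  simp only [sum_Icc_one_div_sq_eq_mul_esymmPrefix]
  exact ⟨hsum.summable, hsum.tsum_eq⟩
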